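/- arXiv:1905.05744 — 3 statements merged into one kernel-verified Lean document; each statement's English description precedes it below -/
import Mathlib

section
/- Let k be a field and a ≤ b, c ≤ d real numbers (allowing b, d = ∞). The graded-module tensor product of one-parameter interval modules satisfies k[a,b) ⊗_gr k[c,d) ≅ k[a+c, min{a+d, b+c}). -/
open CategoryTheory

noncomputable section
attribute [local instance] Classical.propDecidable
set_option linter.unusedSectionVars false

variable (R : Type) [Ring R] {P : Type} [Preorder P]

/-- Condition that a subset is order-convex. -/
def IsConvexSet (I : Set P) : Prop := ∀ ⦃x y z : P⦄, x ∈ I → z ∈ I → x ≤ y → y ≤ z → y ∈ I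

/-- The value of the interval persistence module at a point. -/
def intervalObj (I : Set P) (a : P) : Submodule R R :=
  if a ∈ I then (⊤ : Submodule R R) else ⊥

lemma intervalObj_eq_zero {I : Set P} {a : P} (h : a ∉ I) (x : intervalObj R I a) :
    x = 0 := by
  have hx := x.2
  simp only [intervalObj, if_neg h, Submodule.mem_bot] at hx
  exact Subtype.ext hx

/-- The structure map of the interval module between two degrees. -/
def intervalMapAux (I : Set P) (a b : P) :
    (intervalObj R I a) →ₗ[R] (intervalObj R I b) :=
  if h : a ∈ I ∧ b ∈ I then
    Submodule.inclusion (by simp [intervalObj, h.1, h.2])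
  else 0

lemma intervalMapAux_coe {I : Set P} {a b : P} (ha : a ∈ I) (hb : b ∈ I)
    (x : intervalObj R I a) : ((intervalMapAux R I a b x : R)) = (x : R) := by
  simp [intervalMapAux, ha, hb]

lemma intervalMapAux_of_not {I : Set P} {a b : P} (h : ¬(a ∈ I ∧ b ∈ I))
    (x : intervalObj R I a) : intervalMapAux R I a b x = 0 := by
  simp [intervalMapAux, h]

/-- The interval (indicator) persistence module of a convex set `I`,
as a functor from the preorder `P` to `R`-modules. -/
def intervalModule (I : Set P) (hI : IsConvexSet I) : P ⥤ ModuleCat R where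
  obj a := ModuleCat.of R (intervalObj R I a)
  map {a b} f := ModuleCat.ofHom (intervalMapAux R I a b)
  map_id a := by
    refine ModuleCat.hom_ext (LinearMap.ext fun x => ?_)
    by_cases h : a ∈ I
    · exact Subtype.ext (intervalMapAux_coe R h h x)
    · rw [intervalObj_eq_zero R h x]
      simp
  map_comp {a b c} f g := by
    refine ModuleCat.hom_ext (LinearMap.ext fun x => ?_)
    show intervalMapAux R I a c x = intervalMapAux R I b c (intervalMapAux R I a b x)
    by_cases ha : a ∈ I
    · by_cases hc : c ∈ I
      · have hb : b ∈ I := hI ha hc (leOfHom f) (leOfHom g)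
        apply Subtype.ext
        rw [intervalMapAux_coe R ha hc, intervalMapAux_coe R hb hc,
          intervalMapAux_coe R ha hb]
      · rw [intervalMapAux_of_not R (fun h => hc h.2),
          intervalMapAux_of_not R (fun h => hc h.2)]
    · rw [intervalObj_eq_zero R ha x]
      simp

end

lemma IsConvexSet.of_ordConnected {P : Type} [Preorder P] {s : Set P}
    (h : s.OrdConnected) : IsConvexSet s :=
  fun _ _ _ hx hz hxy hyz => h.out hx hz ⟨hxy, hyz⟩

open CategoryTheory Limits

noncomputable section
variable (k : Type) [Field k]

/-- The index poset `{(s,t) | s + t ≤ r}` for the graded tensor product. -/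
abbrev SumLe (r : ℝ) : Type := {p : ℝ × ℝ // p.1 + p.2 ≤ r}

lemma SumLe.le1 {r : ℝ} {p q : SumLe r} (h : p ≤ q) : p.1.1 ≤ q.1.1 := h.1
lemma SumLe.le2 {r : ℝ} {p q : SumLe r} (h : p ≤ q) : p.1.2 ≤ q.1.2 := h.2

/-- The diagram `(s,t) ↦ M_s ⊗ N_t` over `{(s,t) | s + t ≤ r}` whose colimit is the
degree-`r` piece of the graded tensor product `M ⊗_gr N`. -/
def grDiagram (M N : ℝ ⥤ ModuleCat k) (r : ℝ) : SumLe r ⥤ ModuleCat k where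
  obj p := ModuleCat.of k (TensorProduct k (M.obj p.1.1) (N.obj p.1.2))
  map {p q} f :=
    ModuleCat.ofHom (TensorProduct.map (M.map (homOfLE (SumLe.le1 (leOfHom f)))).hom
      (N.map (homOfLE (SumLe.le2 (leOfHom f)))).hom)
  map_id p := by
    dsimp
    rw [M.map_id, N.map_id]
    exact ModuleCat.hom_ext TensorProduct.map_id
  map_comp {p q s} f g := by
    rw [show (homOfLE (SumLe.le1 (leOfHom (f ≫ g))) : p.1.1 ⟶ s.1.1) =
        homOfLE (SumLe.le1 (leOfHom f)) ≫ homOfLE (SumLe.le1 (leOfHom g)) from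
        Subsingleton.elim _ _,
      show (homOfLE (SumLe.le2 (leOfHom (f ≫ g))) : p.1.2 ⟶ s.1.2) =
        homOfLE (SumLe.le2 (leOfHom f)) ≫ homOfLE (SumLe.le2 (leOfHom g)) from
        Subsingleton.elim _ _,
      M.map_comp, N.map_comp]
    exact ModuleCat.hom_ext (TensorProduct.map_comp _ _ _ _)

/-- The structure-map cocone: the degree-`r` diagram mapping into the degree-`r'` colimit. -/
def grCocone (M N : ℝ ⥤ ModuleCat k) {r r' : ℝ} (h : r ≤ r') :
    Cocone (grDiagram k M N r) where
  pt := colimit (grDiagram k M N r')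
  ι :=
    { app := fun j => colimit.ι (grDiagram k M N r') ⟨j.1, j.2.trans h⟩
      naturality := fun j j' f => by
        refine (?_ : _ = _).trans (Category.comp_id _).symm
        exact colimit.w (grDiagram k M N r')
          (homOfLE (show (⟨j.1, j.2.trans h⟩ : SumLe r') ≤ ⟨j'.1, j'.2.trans h⟩ from
            leOfHom f)) }

/-- The graded-module tensor product of one-parameter persistence modules:
`(M ⊗_gr N)_r = colim_{s+t ≤ r} (M_s ⊗ N_t)`, with structure maps induced by
inclusions of index posets. -/
def grTensor (M N : ℝ ⥤ ModuleCat k) : ℝ ⥤ ModuleCat k where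
  obj r := colimit (grDiagram k M N r)
  map {r r'} f := colimit.desc (grDiagram k M N r) (grCocone k M N (leOfHom f))
  map_id r := by
    apply colimit.hom_ext
    intro j
    rw [colimit.ι_desc]
    exact (Category.comp_id _).symm
  map_comp {r r' r''} f g := by
    apply colimit.hom_ext
    intro j
    rw [colimit.ι_desc]
    refine ((colimit.ι_desc_assoc _ _ _).trans ?_).symm
    exact colimit.ι_desc _ _

end

/-- The half-open interval `[a, b)` in `ℝ`, where the right endpoint is allowed
to be `∞`. -/
def Ico' (a : ℝ) (b : WithTop ℝ) : Set ℝ := {x : ℝ | a ≤ x ∧ (x : WithTop ℝ) < b}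

lemma isConvexSet_Ico' (a : ℝ) (b : WithTop ℝ) : IsConvexSet (Ico' a b) :=
  fun x y z hx hz hxy hyz =>
    ⟨hx.1.trans hxy, lt_of_le_of_lt (by exact_mod_cast hyz) hz.2⟩

/-! A family of maps `M_s ⊗ N_t → T_{s+t}` natural in `(s, t)` induces a morphism
`M ⊗_gr N ⟶ T`, which is an isomorphism as soon as each `T_r` is, via these maps, the colimit of
the `M_s ⊗ N_t` over `s + t ≤ r`. For `M = k[a,b)`, `N = k[c,d)` and `T = k[a+c, min(a+d, b+c))`
the maps are multiplication `k ⊗ k → k`. In degree `r`, every `x ⊗ y` in degree `(s, t)` equals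
`xy` times the image of the generator `1 ⊗ 1` in degree `(a, c)`; pushing that generator up to
degree `(r - c, c)` or `(a, r - a)` kills it unless `r - c ∈ [a,b)` and `r - a ∈ [c,d)`, which
says exactly that `r ∈ [a+c, min(a+d, b+c))`. -/

open CategoryTheory Limits

noncomputable section
open scoped Classical

section Pairing

variable {k : Type} [Field k] {M N T : ℝ ⥤ ModuleCat k}

variable (M N T) in
structure GrPairing where
  toLinearMap : ∀ s t : ℝ, TensorProduct k (M.obj s) (N.obj t) →ₗ[k] T.obj (s + t)
  naturality : ∀ ⦃s s' t t' : ℝ⦄ (hs : s ≤ s') (ht : t ≤ t'),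
    toLinearMap s' t' ∘ₗ TensorProduct.map (M.map (homOfLE hs)).hom (N.map (homOfLE ht)).hom =
      (T.map (homOfLE (add_le_add hs ht))).hom ∘ₗ toLinearMap s t

namespace GrPairing

variable (μ : GrPairing M N T)

def cocone (r : ℝ) : Cocone (grDiagram k M N r) where
  pt := T.obj r
  ι :=
    { app p := ModuleCat.ofHom ((T.map (homOfLE p.2)).hom ∘ₗ μ.toLinearMap p.1.1 p.1.2)
      naturality p q f := by
        ext1
        change (T.map _).hom ∘ₗ μ.toLinearMap _ _ ∘ₗ TensorProduct.map _ _ =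
          (T.map _).hom ∘ₗ μ.toLinearMap _ _
        rw [μ.naturality, ← LinearMap.comp_assoc, ← ModuleCat.hom_comp, ← T.map_comp]
        rfl }

def lift : grTensor k M N ⟶ T where
  app r := colimit.desc _ (μ.cocone r)
  naturality r r' f := colimit.hom_ext fun p => by
    erw [colimit.ι_desc_assoc, colimit.ι_desc_assoc, colimit.ι_desc]
    ext1
    change (T.map _).hom ∘ₗ μ.toLinearMap _ _ = (T.map _).hom ∘ₗ (T.map _).hom ∘ₗ μ.toLinearMap _ _
    rw [← LinearMap.comp_assoc, ← ModuleCat.hom_comp, ← T.map_comp]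
    rfl

lemma isIso_lift (hμ : ∀ r, IsColimit (μ.cocone r)) : IsIso μ.lift := by
  have (r : ℝ) : IsIso (μ.lift.app r) :=
    (colimit.isColimit _).nonempty_isColimit_iff_isIso_desc.mp ⟨hμ r⟩
  exact NatIso.isIso_of_isIso_app _

end GrPairing

end Pairing

section IntervalObj

variable {R : Type} [Ring R] {P : Type} {I : Set P}

variable (R I) in
def intervalObjMk (x : P) : R →ₗ[R] intervalObj R I x :=
  if h : x ∈ I then LinearMap.codRestrict _ LinearMap.id fun v => by simp [intervalObj, h]
  else 0

lemma coe_intervalObjMk (x : P) (v : R) :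
    (intervalObjMk R I x v : R) = if x ∈ I then v else 0 := by
  unfold intervalObjMk; split_ifs <;> rfl

lemma intervalObjMk_coe {x : P} (hx : x ∈ I) (v : intervalObj R I x) :
    intervalObjMk R I x v = v :=
  Subtype.ext (by simp [coe_intervalObjMk, hx])

variable [Preorder P]

lemma coe_intervalMapAux {x y : P} (v : intervalObj R I x) :
    (intervalMapAux R I x y v : R) = if y ∈ I then (v : R) else 0 := by
  by_cases hx : x ∈ I
  · by_cases hy : y ∈ I
    · simp [intervalMapAux_coe R hx hy, hy]
    · simp [intervalMapAux_of_not R (fun h => hy h.2), hy]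
  · simp [intervalObj_eq_zero R hx v]

lemma intervalMapAux_intervalObjMk {x y : P} (hx : x ∈ I) (v : R) :
    intervalMapAux R I x y (intervalObjMk R I x v) = intervalObjMk R I y v :=
  Subtype.ext (by simp [coe_intervalMapAux, coe_intervalObjMk, hx])

end IntervalObj

section IcoArith

variable {a c : ℝ} {b d : WithTop ℝ}

lemma left_mem_Ico'_of_mem {s : ℝ} (hs : s ∈ Ico' a b) : a ∈ Ico' a b :=
  ⟨le_rfl, lt_of_le_of_lt (WithTop.coe_le_coe.2 hs.1) hs.2⟩

lemma mem_Ico'_add_iff {r : ℝ} :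
    r ∈ Ico' (a + c) (min (↑a + d) (b + ↑c)) ↔ r - c ∈ Ico' a b ∧ r - a ∈ Ico' c d := by
  induction b <;> induction d <;>
    simp only [Ico', Set.mem_ofPred_eq, lt_min_iff, WithTop.coe_lt_top, ← WithTop.coe_add,
      WithTop.top_add, WithTop.add_top, WithTop.coe_lt_coe, and_true] <;>
    grind

lemma mem_Ico'_of_add_mem_Ico' {s t : ℝ} (hs : a ≤ s) (ht : c ≤ t)
    (h : s + t ∈ Ico' (a + c) (min (↑a + d) (b + ↑c))) : s ∈ Ico' a b ∧ t ∈ Ico' c d := by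
  rw [mem_Ico'_add_iff] at h
  exact ⟨⟨hs, lt_of_le_of_lt (WithTop.coe_le_coe.2 (by linarith)) h.1.2⟩,
    ⟨ht, lt_of_le_of_lt (WithTop.coe_le_coe.2 (by linarith)) h.2.2⟩⟩

lemma add_mem_Ico'_of_le {s t r : ℝ} (hs : s ∈ Ico' a b) (ht : t ∈ Ico' c d) (hst : s + t ≤ r)
    (hr : r ∈ Ico' (a + c) (min (↑a + d) (b + ↑c))) :
    s + t ∈ Ico' (a + c) (min (↑a + d) (b + ↑c)) :=
  ⟨add_le_add hs.1 ht.1, lt_of_le_of_lt (WithTop.coe_le_coe.2 hst) hr.2⟩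

end IcoArith

abbrev icoModule (k : Type) [Field k] (a : ℝ) (b : WithTop ℝ) : ℝ ⥤ ModuleCat k :=
  intervalModule k (Ico' a b) (isConvexSet_Ico' a b)

section IcoPairing

variable (k : Type) [Field k] (a : ℝ) (b : WithTop ℝ) (c : ℝ) (d : WithTop ℝ)

def icoPairing :
    GrPairing (icoModule k a b) (icoModule k c d)
      (icoModule k (a + c) (min (↑a + d) (b + ↑c))) where
  toLinearMap s t := intervalObjMk k _ (s + t) ∘ₗ LinearMap.mul' k k ∘ₗ
    TensorProduct.map (Submodule.subtype _) (Submodule.subtype _)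
  naturality s s' t t' hs ht := by
    refine TensorProduct.ext' fun (x : intervalObj k (Ico' a b) s)
      (y : intervalObj k (Ico' c d) t) => Subtype.ext ?_
    change (intervalObjMk k _ (s' + t') ((intervalMapAux k (Ico' a b) s s' x : k) *
        (intervalMapAux k (Ico' c d) t t' y : k)) : k) =
      (intervalMapAux k _ (s + t) (s' + t') (intervalObjMk k _ (s + t) ((x : k) * y)) : k)
    simp only [coe_intervalMapAux, coe_intervalObjMk]
    by_cases hx : s ∈ Ico' a b
    swap; · simp [intervalObj_eq_zero k hx x]
    by_cases hy : t ∈ Ico' c d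
    swap; · simp [intervalObj_eq_zero k hy y]
    by_cases hJ : s' + t' ∈ Ico' (a + c) (min (↑a + d) (b + ↑c))
    · obtain ⟨hx', hy'⟩ := mem_Ico'_of_add_mem_Ico' (hx.1.trans hs) (hy.1.trans ht) hJ
      simp [hJ, hx', hy', add_mem_Ico'_of_le hx hy (add_le_add hs ht) hJ]
    · simp [hJ]

variable {k a b c d}

variable {r : ℝ} (S : Cocone (grDiagram k (icoModule k a b) (icoModule k c d) r))

/-- `S.ι.app p` with its domain spelled as a tensor product of `intervalObj`s, so that lemmas
about elements of `intervalObj` can be rewritten inside it. -/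
def icoLeg (p : SumLe r) :
    TensorProduct k (intervalObj k (Ico' a b) p.1.1) (intervalObj k (Ico' c d) p.1.2) →ₗ[k] S.pt :=
  (S.ι.app p).hom

lemma icoLeg_map {p q : SumLe r} (hpq : p ≤ q)
    (z : TensorProduct k (intervalObj k (Ico' a b) p.1.1) (intervalObj k (Ico' c d) p.1.2)) :
    icoLeg S q (TensorProduct.map (intervalMapAux k _ p.1.1 q.1.1)
      (intervalMapAux k _ p.1.2 q.1.2) z) = icoLeg S p z :=
  S.w_apply (homOfLE hpq) z

abbrev icoUnit : TensorProduct k (intervalObj k (Ico' a b) a) (intervalObj k (Ico' c d) c) :=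
  intervalObjMk k _ a 1 ⊗ₜ intervalObjMk k _ c 1

lemma icoLeg_tmul_eq_smul (hr : a + c ≤ r) (p : SumLe r) (x : intervalObj k (Ico' a b) p.1.1)
    (y : intervalObj k (Ico' c d) p.1.2) :
    icoLeg S p (x ⊗ₜ y) = ((x : k) * y) • icoLeg S ⟨(a, c), hr⟩ icoUnit := by
  obtain ⟨⟨s, t⟩, hst⟩ := p
  by_cases hx : s ∈ Ico' a b
  swap; · simp [intervalObj_eq_zero k hx x]
  by_cases hy : t ∈ Ico' c d
  swap; · simp [intervalObj_eq_zero k hy y]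
  have hmap : TensorProduct.map (intervalMapAux k (Ico' a b) a s) (intervalMapAux k (Ico' c d) c t)
      (((x : k) * y) • icoUnit) = x ⊗ₜ y := by
    rw [map_smul, TensorProduct.map_tmul, intervalMapAux_intervalObjMk (left_mem_Ico'_of_mem hx),
      intervalMapAux_intervalObjMk (left_mem_Ico'_of_mem hy), ← TensorProduct.smul_tmul_smul,
      ← map_smul, ← map_smul, smul_eq_mul, smul_eq_mul, mul_one, mul_one, intervalObjMk_coe hx,
      intervalObjMk_coe hy]
  rw [← hmap, icoLeg_map S (show (⟨(a, c), hr⟩ : SumLe r) ≤ ⟨(s, t), hst⟩ from ⟨hx.1, hy.1⟩),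
    map_smul]

lemma icoLeg_icoUnit_eq_zero (hr : a + c ≤ r)
    (hJ : r ∉ Ico' (a + c) (min (↑a + d) (b + ↑c))) : icoLeg S ⟨(a, c), hr⟩ icoUnit = 0 := by
  rw [mem_Ico'_add_iff, not_and_or] at hJ
  rcases hJ with h | h
  · rw [← icoLeg_map S (p := ⟨(a, c), hr⟩) (q := ⟨(r - c, c), by simp⟩) ⟨by linarith, le_rfl⟩,
      TensorProduct.map_tmul, intervalObj_eq_zero k h (intervalMapAux k _ a (r - c) _),
      TensorProduct.zero_tmul, map_zero]
  · rw [← icoLeg_map S (p := ⟨(a, c), hr⟩) (q := ⟨(a, r - a), by simp⟩) ⟨le_rfl, by linarith⟩,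
      TensorProduct.map_tmul, intervalObj_eq_zero k h (intervalMapAux k _ c (r - a) _),
      TensorProduct.tmul_zero, map_zero]

lemma icoLeg_eq_zero (hJ : r ∉ Ico' (a + c) (min (↑a + d) (b + ↑c))) (p : SumLe r)
    (x : intervalObj k (Ico' a b) p.1.1) (y : intervalObj k (Ico' c d) p.1.2) :
    icoLeg S p (x ⊗ₜ y) = 0 := by
  by_cases hx : p.1.1 ∈ Ico' a b
  swap; · simp [intervalObj_eq_zero k hx x]
  by_cases hy : p.1.2 ∈ Ico' c d
  swap; · simp [intervalObj_eq_zero k hy y]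
  have hr : a + c ≤ r := (add_le_add hx.1 hy.1).trans p.2
  rw [icoLeg_tmul_eq_smul S hr, icoLeg_icoUnit_eq_zero S hr hJ, smul_zero]

variable (r) in
/-- The legs of `(icoPairing k a b c d).cocone r`, retyped as for `icoLeg`. -/
def icoPairingLeg (p : SumLe r) :
    TensorProduct k (intervalObj k (Ico' a b) p.1.1) (intervalObj k (Ico' c d) p.1.2) →ₗ[k]
      intervalObj k (Ico' (a + c) (min (↑a + d) (b + ↑c))) r :=
  (((icoPairing k a b c d).cocone r).ι.app p).hom

lemma icoPairingLeg_tmul (p : SumLe r) (x : intervalObj k (Ico' a b) p.1.1)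
    (y : intervalObj k (Ico' c d) p.1.2) :
    icoPairingLeg r p (x ⊗ₜ y) = intervalObjMk k _ r ((x : k) * y) := by
  refine Subtype.ext ?_
  change (intervalMapAux k _ _ r (intervalObjMk k _ _ ((x : k) * y)) : k) = _
  simp only [coe_intervalMapAux, coe_intervalObjMk]
  by_cases hx : p.1.1 ∈ Ico' a b
  swap; · simp [intervalObj_eq_zero k hx x]
  by_cases hy : p.1.2 ∈ Ico' c d
  swap; · simp [intervalObj_eq_zero k hy y]
  by_cases hr : r ∈ Ico' (a + c) (min (↑a + d) (b + ↑c))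
  · simp [hr, add_mem_Ico'_of_le hx hy p.2 hr]
  · simp [hr]

lemma icoPairingLeg_icoUnit (hr : r ∈ Ico' (a + c) (min (↑a + d) (b + ↑c))) :
    icoPairingLeg r ⟨(a, c), hr.1⟩ icoUnit =
      intervalObjMk k (Ico' (a + c) (min (↑a + d) (b + ↑c))) r 1 := by
  obtain ⟨ha, hc⟩ := mem_Ico'_add_iff.1 hr
  rw [icoPairingLeg_tmul, coe_intervalObjMk, coe_intervalObjMk, if_pos (left_mem_Ico'_of_mem ha),
    if_pos (left_mem_Ico'_of_mem hc), mul_one]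

def icoDesc : intervalObj k (Ico' (a + c) (min (↑a + d) (b + ↑c))) r →ₗ[k] S.pt :=
  if h : r ∈ Ico' (a + c) (min (↑a + d) (b + ↑c)) then
    LinearMap.toSpanSingleton k S.pt (icoLeg S ⟨(a, c), h.1⟩ icoUnit) ∘ₗ Submodule.subtype _
  else 0

variable (k a b c d r) in
def isColimitIcoPairingCocone : IsColimit ((icoPairing k a b c d).cocone r) where
  desc S := ModuleCat.ofHom (icoDesc S)
  fac S p := by
    refine ModuleCat.hom_ext (TensorProduct.ext' fun (x : intervalObj k (Ico' a b) p.1.1)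
      (y : intervalObj k (Ico' c d) p.1.2) => ?_)
    change icoDesc S (icoPairingLeg r p (x ⊗ₜ y)) = icoLeg S p (x ⊗ₜ y)
    rw [icoPairingLeg_tmul]
    by_cases hr : r ∈ Ico' (a + c) (min (↑a + d) (b + ↑c))
    · rw [icoDesc, dif_pos hr, icoLeg_tmul_eq_smul S hr.1 p x y]
      simp [coe_intervalObjMk, hr]
    · rw [icoDesc, dif_neg hr, icoLeg_eq_zero S hr, LinearMap.zero_apply]
  uniq S m hm := by
    refine ModuleCat.hom_ext (LinearMap.ext fun
      (v : intervalObj k (Ico' (a + c) (min (↑a + d) (b + (c : WithTop ℝ)))) r) => ?_)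
    change m.hom v = icoDesc S v
    by_cases hr : r ∈ Ico' (a + c) (min (↑a + d) (b + ↑c))
    · have hv : icoPairingLeg r ⟨(a, c), hr.1⟩ ((v : k) • icoUnit) = v := by
        rw [map_smul, icoPairingLeg_icoUnit hr, ← map_smul, smul_eq_mul, mul_one,
          intervalObjMk_coe hr]
      calc m.hom v = m.hom (icoPairingLeg r ⟨(a, c), hr.1⟩ ((v : k) • icoUnit)) := by rw [hv]
        _ = icoLeg S ⟨(a, c), hr.1⟩ ((v : k) • icoUnit) :=
          LinearMap.congr_fun (congrArg ModuleCat.Hom.hom (hm _)) _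
        _ = icoDesc S v := by rw [map_smul, icoDesc, dif_pos hr]; rfl
    · obtain rfl := intervalObj_eq_zero k hr v
      exact (map_zero m.hom).trans (map_zero (icoDesc S)).symm

end IcoPairing

end

open CategoryTheory in
theorem grTensor_interval_general (k : Type) [Field k] (a c : ℝ) (b d : WithTop ℝ) :
    Nonempty
      (grTensor k (intervalModule k (Ico' a b) (isConvexSet_Ico' a b))
          (intervalModule k (Ico' c d) (isConvexSet_Ico' c d)) ≅
        intervalModule k (Ico' (a + c) (min ((a : WithTop ℝ) + d) (b + (c : WithTop ℝ))))
          (isConvexSet_Ico' _ _)) :=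
  have := (icoPairing k a b c d).isIso_lift (isColimitIcoPairingCocone k a b c d)
  ⟨asIso (icoPairing k a b c d).lift⟩

open CategoryTheory in
/-- Graded tensor product of interval modules:
`k[a,b) ⊗_gr k[c,d) ≅ k[a+c, min{a+d, b+c})`, where `b` and `d` may be `∞`. -/
theorem grTensor_interval (k : Type) [Field k] (a c : ℝ) (b d : WithTop ℝ)
    (hab : (a : WithTop ℝ) ≤ b) (hcd : (c : WithTop ℝ) ≤ d) :
    Nonempty
      (grTensor k (intervalModule k (Ico' a b) (isConvexSet_Ico' a b))
          (intervalModule k (Ico' c d) (isConvexSet_Ico' c d)) ≅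
        intervalModule k (Ico' (a + c) (min ((a : WithTop ℝ) + d) (b + (c : WithTop ℝ))))
          (isConvexSet_Ico' _ _)) :=
  grTensor_interval_general k a c b d
end

section
/- Let (P,≤) be a lattice, k a field, and D ⊆ P a down-set closed under binary joins (a, b ∈ D implies a ∨ b ∈ D). Then, viewed as a sheaf on P with the Alexandrov topology, the interval module k[D] is flabby: for every up-set U ⊆ P, the restriction map lim_{x∈P} k[D]_x → lim_{x∈U} k[D]_x is surjective. -/
open CategoryTheory

noncomputable section
attribute [local instance] Classical.propDecidable
set_option linter.unusedSectionVars false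

variable (R : Type) [Ring R] {P : Type} [Preorder P]

end

open CategoryTheory

noncomputable section
variable (k : Type) [Field k] {P : Type} [Preorder P]

/-- The module of sections of a persistence module (viewed as a sheaf on the Alexandrov
topology) over a subset `U`: compatible families `(f x)_{x ∈ U}`, i.e. the limit
`lim_{x ∈ U} M_x`. -/
def secsSub (M : P ⥤ ModuleCat k) (U : Set P) :
    Submodule k (Π x : U, M.obj x.1) where
  carrier := {f | ∀ (x y : U) (h : (x : P) ≤ (y : P)), (M.map (homOfLE h)) (f x) = f y}
  add_mem' := fun hf hg x y h => by simp [hf x y h, hg x y h]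
  zero_mem' := fun x y h => by simp
  smul_mem' := fun c f hf x y h => by simp [hf x y h]

/-- The restriction map on sections along an inclusion of subsets. -/
def secsRestrict (M : P ⥤ ModuleCat k) {U V : Set P} (hUV : U ⊆ V) :
    secsSub k M V →ₗ[k] secsSub k M U where
  toFun f :=
    ⟨fun x => f.1 ⟨x.1, hUV x.2⟩,
      fun x y h => f.2 ⟨x.1, hUV x.2⟩ ⟨y.1, hUV y.2⟩ h⟩
  map_add' _ _ := rfl
  map_smul' _ _ := rfl

end

/-!
A section of `k[D]` over `U` takes one and the same value on all of `U ∩ D`: two points of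
`U ∩ D` both lie below their join, which is again in `U ∩ D`, so their values agree with the
value there. Extending this constant by zero off `D` is a global section because `D` is a
lower set, and it restricts to the given section.
-/

namespace intervalModule

section

variable {R : Type} [Ring R] {P : Type} [Preorder P] {I : Set P} {hI : IsConvexSet I}

lemma map_val_of_mem {a b : P} (hab : a ≤ b) (ha : a ∈ I) (hb : b ∈ I)
    (x : (intervalModule R I hI).obj a) :
    ((intervalModule R I hI).map (homOfLE hab) x).1 = x.1 :=
  intervalMapAux_coe R ha hb x

lemma obj_eq_zero_of_notMem {a : P} (ha : a ∉ I) (x : (intervalModule R I hI).obj a) :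
    x = 0 :=
  intervalObj_eq_zero R ha x

end

variable {k : Type} [Field k] {P : Type} [Preorder P] {I : Set P} {hI : IsConvexSet I}

lemma secsSub_val_eq_of_le {U : Set P} (f : secsSub k (intervalModule k I hI) U)
    {a b : U} (hab : (a : P) ≤ b) (ha : (a : P) ∈ I) (hb : (b : P) ∈ I) :
    (f.1 a).1 = (f.1 b).1 := by
  rw [← f.2 a b hab, map_val_of_mem hab ha hb]

lemma exists_secsSub_val_eq_of_directedOn {U : Set P} (hUI : DirectedOn (· ≤ ·) (U ∩ I))
    (f : secsSub k (intervalModule k I hI) U) :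
    ∃ c : k, ∀ x : U, (x : P) ∈ I → (f.1 x).1 = c := by
  by_cases hne : (U ∩ I).Nonempty
  · obtain ⟨x₀, hx₀U, hx₀I⟩ := hne
    refine ⟨(f.1 ⟨x₀, hx₀U⟩).1, fun x hxI => ?_⟩
    obtain ⟨z, ⟨hzU, hzI⟩, hxz, hx₀z⟩ := hUI x ⟨x.2, hxI⟩ x₀ ⟨hx₀U, hx₀I⟩
    rw [secsSub_val_eq_of_le f (b := ⟨z, hzU⟩) hxz hxI hzI,
      secsSub_val_eq_of_le f (a := ⟨x₀, hx₀U⟩) (b := ⟨z, hzU⟩) hx₀z hx₀I hzI]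
  · exact ⟨0, fun x hxI => (hne ⟨x, x.2, hxI⟩).elim⟩

noncomputable def constSection [DecidablePred (· ∈ I)] (hI' : IsLowerSet I) (c : k) :
    secsSub k (intervalModule k I hI) Set.univ :=
  ⟨fun x => if hx : (x : P) ∈ I then ⟨c, by simp [intervalObj, hx]⟩ else 0, by
    intro x y hxy
    by_cases hy : (y : P) ∈ I
    · have hx : (x : P) ∈ I := hI' hxy hy
      apply Subtype.ext
      rw [map_val_of_mem hxy hx hy]
      simp [hx, hy]
    · exact (obj_eq_zero_of_notMem (R := k) hy _).trans (obj_eq_zero_of_notMem hy _).symm⟩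

lemma constSection_val_of_mem [DecidablePred (· ∈ I)] (hI' : IsLowerSet I) (c : k)
    {x : (Set.univ : Set P)} (hx : (x : P) ∈ I) :
    ((constSection (hI := hI) hI' c).1 x).1 = c := by
  simp [constSection, hx]

end intervalModule

open CategoryTheory in
/-- Let `P` be a lattice and `D` a down-set closed under binary joins.  Then the
interval module `k[D]`, viewed as a sheaf on the Alexandrov topology, is flabby:
for every up-set `U`, the restriction map `lim_{x∈P} k[D]_x → lim_{x∈U} k[D]_x`
on sections is surjective. -/
theorem downset_join_closed_flabby (k : Type) [Field k] {P : Type} [Lattice P]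
    (D : Set P) (hD : IsLowerSet D) (hDjoin : ∀ a b, a ∈ D → b ∈ D → a ⊔ b ∈ D)
    (U : Set P) (hU : IsUpperSet U) :
    Function.Surjective
      (secsRestrict k
        (intervalModule k D (fun _ _ _ _ hz _ hyz => hD hyz hz))
        (Set.subset_univ U)) := by
  classical
  intro f
  have hUD : DirectedOn (· ≤ ·) (U ∩ D) :=
    (hU.supClosed.inter fun a ha b hb => hDjoin a b ha hb).directedOn
  obtain ⟨c, hc⟩ := intervalModule.exists_secsSub_val_eq_of_directedOn hUD f
  refine ⟨intervalModule.constSection hD c, Subtype.ext (funext fun x => ?_)⟩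
  by_cases hx : (x : P) ∈ D
  · exact Subtype.ext ((intervalModule.constSection_val_of_mem hD c hx).trans (hc x hx).symm)
  · exact (intervalModule.obj_eq_zero_of_notMem hx _).trans
      (intervalModule.obj_eq_zero_of_notMem hx _).symm
end

section
/- Let a, b ∈ ℝ² be incomparable in the product order, and let D = D_a ∪ D_b be the union of the principal down-sets at a and b, and U = U_a ∪ U_b the union of the principal up-sets. Then for k a field, lim_{x∈ℝ²} k[D]_x ≅ k while lim_{x∈U} k[D]_x ≅ k², so the restriction map of the sheaf k[D] from ℝ² to U is not surjective; hence k[D] is not a flabby sheaf (and therefore not an injective persistence module). -/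
open CategoryTheory

noncomputable section
attribute [local instance] Classical.propDecidable
set_option linter.unusedSectionVars false

variable (R : Type) [Ring R] {P : Type} [Preorder P]

end

open CategoryTheory

/-- `ℝ²` with the product partial order. -/
def R2 : Type := Fin 2 → ℝ

noncomputable instance : PartialOrder R2 := inferInstanceAs (PartialOrder (Fin 2 → ℝ))

/-!
Since `D` is a down-set and any two points of `ℝ²` have a common lower bound, a global section
of `k[D]` takes the same value at every point of `D`, so the global sections form `k`. The only
points of `D` in `U` are `a` and `b`, and they are incomparable, so a section over `U` may take
independent values at them: the sections over `U` form `k²`. A linear map `k → k²` is not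
surjective.
-/

theorem IsLowerSet.isConvexSet {P : Type} [Preorder P] {D : Set P} (hD : IsLowerSet D) :
    IsConvexSet D :=
  fun _ _ _ _ hz _ hyz => hD hyz hz

section IntervalSections

variable {k : Type} [Field k] {P : Type} [Preorder P] {D : Set P} {V : Set P}

def secsCoeffs (hD : IsConvexSet D) : secsSub k (intervalModule k D hD) V →ₗ[k] (V → k) where
  toFun f x := (f.1 x).1
  map_add' _ _ := rfl
  map_smul' _ _ := rfl

theorem secsCoeffs_eq_of_le {hD : IsConvexSet D} (f : secsSub k (intervalModule k D hD) V)
    {x y : V} (hxy : x.1 ≤ y.1) (hx : x.1 ∈ D) (hy : y.1 ∈ D) :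
    secsCoeffs hD f x = secsCoeffs hD f y := by
  change (f.1 x).1 = (f.1 y).1
  rw [← f.2 x y hxy]
  exact (intervalMapAux_coe k hx hy _).symm

theorem secsCoeffs_ext {hD : IsConvexSet D} {f g : secsSub k (intervalModule k D hD) V}
    (h : ∀ x : V, x.1 ∈ D → secsCoeffs hD f x = secsCoeffs hD g x) : f = g := by
  refine Subtype.ext (funext fun x => ?_)
  by_cases hx : x.1 ∈ D
  · exact Subtype.ext (h x hx)
  · exact (intervalObj_eq_zero k hx _).trans (intervalObj_eq_zero k hx _).symm

open Classical in
noncomputable def secsOfFun (hD : IsLowerSet D) (g : V → k)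
    (hg : ∀ x y : V, x.1 ≤ y.1 → x.1 ∈ D → y.1 ∈ D → g x = g y) :
    secsSub k (intervalModule k D hD.isConvexSet) V :=
  ⟨fun x => if hx : x.1 ∈ D then ⟨g x, by simp [intervalObj, hx]⟩ else 0, by
    intro x y hxy
    by_cases hy : y.1 ∈ D
    · have hx : x.1 ∈ D := hD hxy hy
      refine Subtype.ext ?_
      change ((intervalMapAux k D x y (if hx : x.1 ∈ D then ⟨g x, _⟩ else 0) : k)) =
        ((if hy : y.1 ∈ D then ⟨g y, _⟩ else 0 : intervalObj k D y) : k)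
      rw [intervalMapAux_coe k hx hy, dif_pos hx, dif_pos hy]
      exact hg x y hxy hx hy
    · exact (intervalObj_eq_zero k hy _).trans (intervalObj_eq_zero k hy _).symm⟩

theorem secsCoeffs_secsOfFun (hD : IsLowerSet D) (g : V → k)
    (hg : ∀ x y : V, x.1 ≤ y.1 → x.1 ∈ D → y.1 ∈ D → g x = g y) {x : V} (hx : x.1 ∈ D) :
    secsCoeffs hD.isConvexSet (secsOfFun hD g hg) x = g x :=
  congrArg Subtype.val (dif_pos hx)

theorem secsCoeffs_univ_eq [IsCodirectedOrder P] (hD : IsLowerSet D)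
    (f : secsSub k (intervalModule k D hD.isConvexSet) Set.univ) {x y : P} (hx : x ∈ D)
    (hy : y ∈ D) :
    secsCoeffs hD.isConvexSet f ⟨x, trivial⟩ = secsCoeffs hD.isConvexSet f ⟨y, trivial⟩ := by
  obtain ⟨z, hzx, hzy⟩ := exists_le_le x y
  have hz : z ∈ D := hD hzx hx
  have hzx' := secsCoeffs_eq_of_le f (x := ⟨z, trivial⟩) (y := ⟨x, trivial⟩) hzx hz hx
  have hzy' := secsCoeffs_eq_of_le f (x := ⟨z, trivial⟩) (y := ⟨y, trivial⟩) hzy hz hy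
  rw [← hzx', hzy']

noncomputable def secsUnivEquiv [IsCodirectedOrder P] (hD : IsLowerSet D) {d : P}
    (hd : d ∈ D) : secsSub k (intervalModule k D hD.isConvexSet) Set.univ ≃ₗ[k] k where
  toFun f := secsCoeffs hD.isConvexSet f ⟨d, trivial⟩
  map_add' _ _ := rfl
  map_smul' _ _ := rfl
  invFun c := secsOfFun hD (fun _ => c) fun _ _ _ _ _ => rfl
  left_inv f := secsCoeffs_ext fun _ hx =>
    (secsCoeffs_secsOfFun hD _ _ hx).trans (secsCoeffs_univ_eq hD f hd hx)
  right_inv _ := secsCoeffs_secsOfFun hD _ _ (V := Set.univ) (x := ⟨d, trivial⟩) hd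

open Classical in
noncomputable def secsEquivOfIsAntichain (hD : IsLowerSet D)
    (hVD : IsAntichain (· ≤ ·) (V ∩ D)) :
    secsSub k (intervalModule k D hD.isConvexSet) V ≃ₗ[k] (↥(V ∩ D) → k) where
  toFun f p := secsCoeffs hD.isConvexSet f ⟨p, p.2.1⟩
  map_add' _ _ := rfl
  map_smul' _ _ := rfl
  invFun g := secsOfFun hD (fun x => if hx : x.1 ∈ D then g ⟨x, x.2, hx⟩ else 0) <| by
    intro x y hxy hx hy
    obtain rfl : x = y := Subtype.ext (hVD.eq ⟨x.2, hx⟩ ⟨y.2, hy⟩ hxy)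
    rfl
  left_inv f := secsCoeffs_ext fun _ hx => by rw [secsCoeffs_secsOfFun hD _ _ hx, dif_pos hx]
  right_inv g := funext fun p =>
    (secsCoeffs_secsOfFun hD _ _ (x := ⟨p, p.2.1⟩) p.2.2).trans (dif_pos p.2.2)

end IntervalSections

theorem LinearMap.not_surjective_of_finrank_lt {K M N : Type*} [DivisionRing K]
    [AddCommGroup M] [Module K M] [AddCommGroup N] [Module K N] [Module.Finite K M]
    (f : M →ₗ[K] N) (h : Module.finrank K M < Module.finrank K N) : ¬ Function.Surjective f :=
  fun hf => (LinearMap.finrank_le_finrank_of_surjective hf).not_gt h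

theorem Set.nonempty_linearEquiv_finTwo_of_eq_pair (k : Type) [Field k] {α : Type*} {s : Set α}
    {a b : α} (hs : s = {a, b}) (hab : a ≠ b) : Nonempty ((s → k) ≃ₗ[k] (Fin 2 → k)) := by
  subst hs
  have hcard : Nat.card ({a, b} : Set α) = 2 := by rw [Nat.card_coe_set_eq, Set.ncard_pair hab]
  exact ⟨LinearEquiv.funCongrLeft k k (Finite.equivFinOfCardEq hcard).symm⟩

theorem Set.Ici_union_Ici_inter_Iic_union_Iic {α : Type*} [PartialOrder α] {a b : α}
    (hab : ¬ a ≤ b) (hba : ¬ b ≤ a) : (Ici a ∪ Ici b) ∩ (Iic a ∪ Iic b) = {a, b} := by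
  ext x
  simp only [mem_inter_iff, mem_union, mem_Ici, mem_Iic, mem_insert_iff, mem_singleton_iff]
  constructor
  · rintro ⟨hax | hbx, hxa | hxb⟩
    · exact Or.inl (le_antisymm hxa hax)
    · exact absurd (hax.trans hxb) hab
    · exact absurd (hbx.trans hxa) hba
    · exact Or.inr (le_antisymm hxb hbx)
  · rintro (rfl | rfl)
    · exact ⟨Or.inl le_rfl, Or.inl le_rfl⟩
    · exact ⟨Or.inr le_rfl, Or.inr le_rfl⟩

instance : IsCodirectedOrder R2 := inferInstanceAs (IsCodirectedOrder (Fin 2 → ℝ))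

open CategoryTheory in
/-- Let `a, b ∈ ℝ²` be incomparable, `D = D_a ∪ D_b` and `U = U_a ∪ U_b`.  Then the
space of global sections of the sheaf `k[D]` is `k`, its sections over `U` form `k²`,
and the restriction map is not surjective; hence `k[D]` is not flabby. -/
theorem union_downsets_not_flabby (k : Type) [Field k] (a b : R2)
    (hab : ¬ a ≤ b) (hba : ¬ b ≤ a) :
    Nonempty
      ((secsSub k
        (intervalModule k ({x : R2 | x ≤ a} ∪ {x : R2 | x ≤ b})
          (fun _ _ _ _ hz hxy hyz =>
            hz.imp (fun h => le_trans hyz h) (fun h => le_trans hyz h)))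
        (Set.univ : Set R2)) ≃ₗ[k] k) ∧
    Nonempty
      ((secsSub k
        (intervalModule k ({x : R2 | x ≤ a} ∪ {x : R2 | x ≤ b})
          (fun _ _ _ _ hz hxy hyz =>
            hz.imp (fun h => le_trans hyz h) (fun h => le_trans hyz h)))
        ({x : R2 | a ≤ x} ∪ {x : R2 | b ≤ x})) ≃ₗ[k] (Fin 2 → k)) ∧
    ¬ Function.Surjective
      (secsRestrict k
        (intervalModule k ({x : R2 | x ≤ a} ∪ {x : R2 | x ≤ b})
          (fun _ _ _ _ hz hxy hyz =>
            hz.imp (fun h => le_trans hyz h) (fun h => le_trans hyz h)))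
        (Set.subset_univ ({x : R2 | a ≤ x} ∪ {x : R2 | b ≤ x}))) := by
  have hD : IsLowerSet ({x : R2 | x ≤ a} ∪ {x : R2 | x ≤ b}) :=
    (isLowerSet_Iic a).union (isLowerSet_Iic b)
  have hUD := Set.Ici_union_Ici_inter_Iic_union_Iic hab hba
  have hanti : IsAntichain (· ≤ ·) (({x : R2 | a ≤ x} ∪ {x : R2 | b ≤ x}) ∩
      ({x : R2 | x ≤ a} ∪ {x : R2 | x ≤ b})) :=
    hUD ▸ Set.pairwise_pair.2 fun _ => ⟨hab, hba⟩
  obtain ⟨e⟩ := Set.nonempty_linearEquiv_finTwo_of_eq_pair k hUD (ne_of_not_le hab)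
  let e₁ := secsUnivEquiv (k := k) hD (d := a) (Or.inl (le_refl a))
  let e₂ := (secsEquivOfIsAntichain (k := k) hD hanti).trans e
  have : Module.Finite k (secsSub k (intervalModule k _ hD.isConvexSet) Set.univ) :=
    e₁.symm.finiteDimensional
  refine ⟨⟨e₁⟩, ⟨e₂⟩, LinearMap.not_surjective_of_finrank_lt _ ?_⟩
  rw [e₁.finrank_eq, e₂.finrank_eq, Module.finrank_self, Module.finrank_fin_fun]
  exact one_lt_two
end
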